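/- arXiv:1212.4198 — 2 statements merged into one kernel-verified Lean document; each statement's English description precedes it below -/
import Mathlib

section
/- Let β > 0, h₂ > 0, h₁ > 0, γ > 0, π > 0, θ ≥ 0, ρ ≥ 0 and P ≥ 0, and define the per-user link-quality indicator φ(p) = β·log₂(1+h₂·p) − (π+θ·h₁)·p + ρ·log₂(1 + γ/(1+h₁·p)) on [0, P], where log₂ x = ln x / ln 2. Then every maximizer p* of φ over [0, P] satisfies p* ≤ max{ β/((π+θ·h₁)·ln 2) − 1/h₂ , 0 }; that is, the waterfilling point of the concave part of φ is an upper bound for every maximizer of the full (non-concave) indicator. -/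
/-!
Write `φ = f + g` with `f p = β·log₂(1 + h₂ p) − (π + θ h₁) p` and
`g p = ρ·log₂(1 + γ/(1 + h₁ p))`. The concave part `f` has derivative
`β h₂ / ((1 + h₂ p) ln 2) − (π + θ h₁)`, which is negative beyond the waterfilling point
`w = β/((π + θ h₁) ln 2) − 1/h₂`, so `f` is strictly decreasing on `[w, ∞)`; the
interference part `g` is decreasing on `[0, ∞)`. Hence a point `p > max w 0` of `[0, P]` is
strictly beaten by `max w 0`, and cannot be a maximizer.
-/

open Real Set

lemma Real.log_sub_log_lt {x y : ℝ} (hx : 0 < x) (hxy : x < y) :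
    log y - log x < (y - x) / x := by
  have hy : 0 < y := hx.trans hxy
  have hne : y / x ≠ 1 := ((one_lt_div hx).mpr hxy).ne'
  calc log y - log x = log (y / x) := (log_div hy.ne' hx.ne').symm
    _ < y / x - 1 := log_lt_sub_one_of_pos (div_pos hy hx) hne
    _ = (y - x) / x := by field_simp

lemma strictAntiOn_mul_logb_one_add_sub_mul {b β h c : ℝ} (hb : 1 < b) (hβ : 0 < β)
    (hh : 0 < h) (hc : 0 < c) :
    StrictAntiOn (fun p => β * logb b (1 + h * p) - c * p) (Ici (β / (c * log b) - 1 / h)) := by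
  intro s hs t _ hst
  have hlogb : 0 < log b := log_pos hb
  have hs₁ : β * h ≤ c * log b * (1 + h * s) := by
    rw [mem_Ici, sub_le_iff_le_add, div_le_iff₀ (by positivity)] at hs
    calc β * h ≤ (s + 1 / h) * (c * log b) * h := by gcongr
      _ = c * log b * (1 + h * s) := by field_simp; ring
  have hpos : 0 < 1 + h * s := pos_of_mul_pos_right (hs₁.trans_lt' (by positivity)) (by positivity)
  have hgap : log (1 + h * t) - log (1 + h * s) < h * (t - s) / (1 + h * s) := by
    convert log_sub_log_lt hpos (by nlinarith : 1 + h * s < 1 + h * t) using 2; ring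
  have key : β * (log (1 + h * t) - log (1 + h * s)) < c * log b * (t - s) := calc
    β * (log (1 + h * t) - log (1 + h * s)) < β * (h * (t - s) / (1 + h * s)) := by gcongr
    _ = β * h * (t - s) / (1 + h * s) := by ring
    _ ≤ c * log b * (1 + h * s) * (t - s) / (1 + h * s) := by gcongr
    _ = c * log b * (t - s) := by field_simp
  simp only [logb]
  have hdiff : β * (log (1 + h * t) / log b) - β * (log (1 + h * s) / log b) < c * (t - s) := by
    rw [← mul_sub, ← sub_div, mul_div_assoc', div_lt_iff₀ hlogb]
    linarith
  linarith

lemma antitoneOn_mul_logb_one_add_div {b ρ γ h : ℝ} (hb : 1 < b) (hρ : 0 ≤ ρ) (hγ : 0 ≤ γ)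
    (hh : 0 ≤ h) :
    AntitoneOn (fun p => ρ * logb b (1 + γ / (1 + h * p))) (Ici 0) := by
  intro s hs t ht hst
  dsimp only
  have ht₁ : 0 < 1 + h * t := by have := mul_nonneg hh (mem_Ici.mp ht); positivity
  have hs₁ : 0 < 1 + h * s := by have := mul_nonneg hh (mem_Ici.mp hs); positivity
  gcongr

theorem maximizer_le_waterfilling_general (β h₂ h₁ γ pim θ ρ P : ℝ)
    (hβ : 0 < β) (hh₂ : 0 < h₂) (hh₁ : 0 < h₁) (hγ : 0 < γ)
    (hpi : 0 < pim) (hθ : 0 ≤ θ) (hρ : 0 ≤ ρ)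
    (pstar : ℝ) (hmem : pstar ∈ Set.Icc 0 P)
    (hmax : IsMaxOn
      (fun p : ℝ => β * (Real.log (1 + h₂ * p) / Real.log 2)
        - (pim + θ * h₁) * p
        + ρ * (Real.log (1 + γ / (1 + h₁ * p)) / Real.log 2))
      (Set.Icc 0 P) pstar) :
    pstar ≤ max (β / ((pim + θ * h₁) * Real.log 2) - 1 / h₂) 0 := by
  set w := max (β / ((pim + θ * h₁) * Real.log 2) - 1 / h₂) 0
  by_contra! hw
  have hc : 0 < pim + θ * h₁ := by positivity
  have hwmem : w ∈ Icc 0 P := ⟨le_max_right _ _, hw.le.trans hmem.2⟩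
  have hφ := isMaxOn_iff.mp hmax w hwmem
  have hf := strictAntiOn_mul_logb_one_add_sub_mul one_lt_two hβ hh₂ hc
    (le_max_left _ _ : _ ≤ w) (le_max_left _ _ |>.trans hw.le) hw
  have hg := antitoneOn_mul_logb_one_add_div one_lt_two hρ hγ.le hh₁.le
    (le_max_right _ _ : 0 ≤ w) (le_max_right _ _ |>.trans hw.le) hw.le
  simp only [logb] at hf hg
  linarith

/-- Every maximizer of the per-user link-quality indicator
`φ(p) = β·log₂(1+h₂·p) − (π+θ·h₁)·p + ρ·log₂(1 + γ/(1+h₁·p))` over `[0, P]`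
is upper bounded by the waterfilling point `max (β/((π+θ·h₁)·ln 2) − 1/h₂) 0`
of the concave part of `φ`. -/
theorem maximizer_le_waterfilling (β h₂ h₁ γ pim θ ρ P : ℝ)
    (hβ : 0 < β) (hh₂ : 0 < h₂) (hh₁ : 0 < h₁) (hγ : 0 < γ)
    (hpi : 0 < pim) (hθ : 0 ≤ θ) (hρ : 0 ≤ ρ) (hP : 0 ≤ P)
    (pstar : ℝ) (hmem : pstar ∈ Set.Icc 0 P)
    (hmax : IsMaxOn
      (fun p : ℝ => β * (Real.log (1 + h₂ * p) / Real.log 2)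
        - (pim + θ * h₁) * p
        + ρ * (Real.log (1 + γ / (1 + h₁ * p)) / Real.log 2))
      (Set.Icc 0 P) pstar) :
    pstar ≤ max (β / ((pim + θ * h₁) * Real.log 2) - 1 / h₂) 0 :=
  maximizer_le_waterfilling_general β h₂ h₁ γ pim θ ρ P hβ hh₂ hh₁ hγ hpi hθ hρ pstar hmem hmax
end

section
/- Let M ∈ ℕ, γ > 0, and define r₁(x) = log₂(1 + γ/(1+x)) with log₂ x = ln x / ln 2. Let w, h, p : Fin (M+1) → ℝ satisfy w_m ∈ {0, 1} for all m, Σ_m w_m = 1, h_m ≥ 0 and p_m ≥ 0 for all m. Let p̌ ≥ 0 and ř ≤ log₂(1+γ). Suppose the aggregate short-term constraints hold: Σ_m w_m·h_m·p_m ≤ p̌ and Σ_m w_m·r₁(h_m·p_m) ≥ ř. Define p′_m := w_m·p_m. Then the per-user constraints hold for every m: h_m·p′_m ≤ p̌ and r₁(h_m·p′_m) ≥ ř; moreover w_m·p′_m = w_m·p_m for all m, so the scheduled powers (and hence the secondary objective and all scheduled quantities) are unchanged. Consequently, replacing the aggregate short-term constraints by the per-user short-term constraints entails no loss of optimality. 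-/
/-!
Orthogonal access forces the schedule `w` to be the indicator of the one scheduled user, so the
aggregate constraints are that user's per-user constraints, and its power is unchanged. Every
unscheduled user gets power `0`, where the constraints reduce to `0 ≤ p̌` and `ř ≤ r₁(0)`.
-/

open Finset

theorem eq_single_of_zero_or_one_of_sum_eq_one {ι R : Type*} [Fintype ι] [DecidableEq ι]
    [Semiring R] [PartialOrder R] [IsStrictOrderedRing R] {w : ι → R}
    (hw : ∀ i, w i = 0 ∨ w i = 1) (hsum : ∑ i, w i = 1) {m : ι} (hm : w m = 1) :
    w = Pi.single m 1 := by
  have hnonneg : ∀ i ∈ univ, 0 ≤ w i := fun i _ => (hw i).elim (·.ge) (· ▸ zero_le_one)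
  funext i
  rcases eq_or_ne i m with rfl | hi
  · simp [hm]
  · rw [Pi.single_eq_of_ne hi]
    refine (hw i).resolve_right fun hi1 => ?_
    have hpair := add_le_sum hnonneg (mem_univ m) (mem_univ i) hi.symm
    rw [hm, hi1, hsum] at hpair
    exact (add_le_iff_nonpos_left.mp hpair).not_gt zero_lt_one

theorem aggregate_implies_per_user_general (M : ℕ) (γ : ℝ)
    (w h p : Fin (M + 1) → ℝ)
    (hw : ∀ m, w m = 0 ∨ w m = 1) (hsum : ∑ m, w m = 1)
    (pcheck : ℝ) (hpcheck : 0 ≤ pcheck)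
    (rcheck : ℝ) (hrcheck : rcheck ≤ Real.log (1 + γ) / Real.log 2)
    (hPow : ∑ m, w m * (h m * p m) ≤ pcheck)
    (hRate : rcheck ≤
      ∑ m, w m * (Real.log (1 + γ / (1 + h m * p m)) / Real.log 2)) :
    ∀ m, h m * (w m * p m) ≤ pcheck ∧
      rcheck ≤ Real.log (1 + γ / (1 + h m * (w m * p m))) / Real.log 2 ∧
      w m * (w m * p m) = w m * p m := by
  intro m
  rcases hw m with hm | hm
  · simp [hm, hpcheck, hrcheck]
  · obtain rfl := eq_single_of_zero_or_one_of_sum_eq_one hw hsum hm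
    simp only [Pi.single_apply, ite_mul, one_mul, zero_mul, sum_ite_eq', mem_univ,
      if_true] at hPow hRate
    simp [hPow, hRate]

/-- Under orthogonal access, if the aggregate short-term interference-power
and primary-rate constraints hold, then the modified powers `p′_m = w_m·p_m`
satisfy the per-user constraints for every user, while leaving all scheduled
powers unchanged (`w_m·p′_m = w_m·p_m`): no loss of optimality is incurred by
imposing per-user short-term constraints. -/
theorem aggregate_implies_per_user (M : ℕ) (γ : ℝ) (hγ : 0 < γ)
    (w h p : Fin (M + 1) → ℝ)
    (hw : ∀ m, w m = 0 ∨ w m = 1) (hsum : ∑ m, w m = 1)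
    (hh : ∀ m, 0 ≤ h m) (hp : ∀ m, 0 ≤ p m)
    (pcheck : ℝ) (hpcheck : 0 ≤ pcheck)
    (rcheck : ℝ) (hrcheck : rcheck ≤ Real.log (1 + γ) / Real.log 2)
    (hPow : ∑ m, w m * (h m * p m) ≤ pcheck)
    (hRate : rcheck ≤
      ∑ m, w m * (Real.log (1 + γ / (1 + h m * p m)) / Real.log 2)) :
    ∀ m, h m * (w m * p m) ≤ pcheck ∧
      rcheck ≤ Real.log (1 + γ / (1 + h m * (w m * p m))) / Real.log 2 ∧
      w m * (w m * p m) = w m * p m :=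
  aggregate_implies_per_user_general M γ w h p hw hsum pcheck hpcheck rcheck hrcheck hPow hRate
end
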